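/- Let t be a power of a prime and let r = t + 1. Then there exists an integer K_t such that for every integer k ≥ K_t for which k − 2 is a power of a prime, there exists a (k+r, k) systematic t-error-correcting code, i.e., a code C ⊆ S_{k+r} of size k! such that for every σ ∈ S_k there is exactly one α ∈ C with α_{↓k} = σ, and distinct codewords of C have Kendall τ-distance at least 2t+1. -/

import Mathlib

/-- `AdjTrans σ π` : the sequence `π` is obtained from the sequence `σ` by exchanging
two distinct adjacent elements (an adjacent transposition). -/
def AdjTrans (σ π : List ℤ) : Prop :=
  ∃ (l₁ l₂ : List ℤ) (a b : ℤ), a ≠ b ∧ σ = l₁ ++ a :: b :: l₂ ∧ π = l₁ ++ b :: a :: l₂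

/-- `StepsTo n σ π` : `π` can be obtained from `σ` by a sequence of `n` adjacent
transpositions. -/
def StepsTo : ℕ → List ℤ → List ℤ → Prop
  | 0 => fun σ π => σ = π
  | n + 1 => fun σ π => ∃ τ, AdjTrans σ τ ∧ StepsTo n τ π

/-- The Kendall τ-distance between two sequences: the minimum number of adjacent
transpositions needed to transform one into the other. -/
noncomputable def dK (σ π : List ℤ) : ℕ := sInf {n | StepsTo n σ π}

/-- The list `[a, a+1, ..., a+len-1]` of integers. -/
def rangeList (a len : ℕ) : List ℤ := (List.range' a len).map (fun x => (x : ℤ))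

/-- The substitution map `T_θ`: the `r`-th occurrence (from the left, `0`-indexed) of a
rank `a` in `σ` is replaced by the `r`-th entry of the list `θ a`. -/
def Tmap (θ : ℤ → List ℤ) (σ : List ℤ) : List ℤ :=
  (List.range σ.length).map (fun j =>
    (θ (σ.getD j 0)).getD ((σ.take j).count (σ.getD j 0)) 0)

/-- `psiEntry σ a s` : the number of positions in `σ` strictly to the right of the `s`-th
occurrence (`0`-indexed) of `a` in `σ` that hold an element smaller than `a`. -/
def psiEntry (σ : List ℤ) (a : ℤ) (s : ℕ) : ℕ :=
  (σ.drop (((σ.indexesOf a).getD s σ.length) + 1)).countP (fun x => decide (x < a))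

/-- The Manhattan distance between two vectors of naturals (presented as lists). -/
def manhattanL (x y : List ℕ) : ℕ :=
  ∑ i ∈ Finset.range (max x.length y.length), ((x.getD i 0 : ℤ) - (y.getD i 0 : ℤ)).natAbs

/-- The Lee distance over `Z_q` between two vectors with entries in `{0, …, q-1}`
(presented as lists). -/
def leeDistL (q : ℕ) (x y : List ℕ) : ℕ :=
  ∑ i ∈ Finset.range (max x.length y.length),
    min (((x.getD i 0 : ℤ) - (y.getD i 0 : ℤ)).natAbs)
      (q - ((x.getD i 0 : ℤ) - (y.getD i 0 : ℤ)).natAbs)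

/-- The Lee distance between two vectors over `ZMod q`. -/
def zmodLee {q N : ℕ} (x y : Fin N → ZMod q) : ℕ :=
  ∑ i, min (x i - y i).val (y i - x i).val

/-- `permList k σ` : `σ` is (an ordering representing) a permutation of `{1, …, k}`. -/
def permList (k : ℕ) (σ : List ℤ) : Prop :=
  (↑σ : Multiset ℤ) = (↑(rangeList 1 k) : Multiset ℤ)

/-- The multiset `M_{k,r} = {0^k, k+1, …, k+r}`. -/
def Mkr (k r : ℕ) : Multiset ℤ :=
  Multiset.replicate k (0 : ℤ) + (↑(rangeList (k + 1) r) : Multiset ℤ)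

/-- `α_{↓k}` : delete from `α` all elements larger than `k`. -/
def restrictTo (k : ℕ) (α : List ℤ) : List ℤ :=
  α.filter (fun x => decide (x ≤ (k : ℤ)))

/-- `α_{k↦0}` : replace in `α` every element of `{1, …, k}` by `0`. -/
def mapToZero (k : ℕ) (α : List ℤ) : List ℤ :=
  α.map (fun x => if 1 ≤ x ∧ x ≤ (k : ℤ) then 0 else x)

/-- `star σ ρ = σ ∗ ρ` : replace the zeros of `ρ`, from left to right, by the elements
of `σ` in order. -/
def starP : List ℤ → List ℤ → List ℤ
  | _, [] => []
  | σ, x :: ρ' => if x = 0 then σ.headD 0 :: starP σ.tail ρ' else x :: starP σ ρ'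

/-!
Let `I_v(σ)` count the entries smaller than `v` to the right of `v` in `σ`. An adjacent
transposition changes the vector `I(σ)` by at most one in `ℓ¹`, so the `ℓ¹` distance between
inversion vectors bounds the Kendall distance from below.

Fix a prime `2k < P ≤ 4k` (Bertrand) and `b = ⌊k / 2t⌋`. For `σ ∈ S_k` form the syndrome
`(∑_{v ≤ k} I_v(σ) v^(2l+1))_{l < t}` in `ZMod P`, encode it injectively by `t + 1` digits
below `b` (there are `P^t ≤ b^(t+1)` syndromes once `k ≥ (16t)^(t+1)`), and insert
`k+1, …, k+t+1` into `σ` so that `I_{k+1+j} = 2t · (digit j)`. For two such codewords, either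
the inversion vectors of `σ, σ'` are already `2t + 1` apart, or the syndromes differ: an
integer vector `E` with `‖E‖₁ ≤ 2t` and vanishing odd power sums `∑ E_v v^j`, `j < 2t`, is
zero, because the multiset holding `v` with multiplicity `E_v⁺` and `-v` with multiplicity
`E_v⁻` then has the power sums of its negative, and Newton's identities (in characteristic
`P > 2t`) make the two equal. A differing digit adds `2t` to the nonzero distance between the
inversion vectors.
-/

open Finset

def inversionsAt : List ℤ → ℤ → ℕ
  | [], _ => 0
  | x :: xs, v => (if x = v then xs.countP (· < v) else 0) + inversionsAt xs v

theorem inversionsAt_append (l₁ l₂ : List ℤ) (v : ℤ) :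
    inversionsAt (l₁ ++ l₂) v =
      inversionsAt l₁ v + l₁.count v * l₂.countP (· < v) + inversionsAt l₂ v := by
  induction l₁ with
  | nil => simp [inversionsAt]
  | cons x l₁ ih =>
    simp only [List.cons_append, inversionsAt, ih, List.countP_append, List.count_cons]
    by_cases h : x = v
    · simp [h]
      ring
    · simp [h]

theorem inversionsAt_eq_zero_of_notMem {l : List ℤ} {v : ℤ} (h : v ∉ l) :
    inversionsAt l v = 0 := by
  induction l with
  | nil => rfl
  | cons x xs ih =>
    simp only [List.mem_cons, not_or] at h
    simp [inversionsAt, Ne.symm h.1, ih h.2]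

def inversionDist (S : Finset ℤ) (l l' : List ℤ) : ℕ :=
  ∑ v ∈ S, ((inversionsAt l v : ℤ) - inversionsAt l' v).natAbs

theorem inversionDist_triangle (S : Finset ℤ) (l₁ l₂ l₃ : List ℤ) :
    inversionDist S l₁ l₃ ≤ inversionDist S l₁ l₂ + inversionDist S l₂ l₃ := by
  rw [inversionDist, inversionDist, inversionDist, ← Finset.sum_add_distrib]
  exact Finset.sum_le_sum fun v _ => by omega

/-- An adjacent transposition of `a` and `b` only changes the coordinate of `max a b`, by one. -/
theorem inversionDist_le_one_of_adjTrans {l l' : List ℤ} (h : AdjTrans l l') (S : Finset ℤ) :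
    inversionDist S l l' ≤ 1 := by
  obtain ⟨l₁, l₂, a, b, hab, rfl, rfl⟩ := h
  have hv : ∀ v, ((inversionsAt (l₁ ++ a :: b :: l₂) v : ℤ) -
      inversionsAt (l₁ ++ b :: a :: l₂) v).natAbs ≤ if v = max a b then 1 else 0 := by
    intro v
    rw [inversionsAt_append, inversionsAt_append, ((List.Perm.swap a b l₂).countP_eq _)]
    simp only [inversionsAt, List.countP_cons]
    rcases lt_or_gt_of_ne hab with hlt | hlt <;>
      simp only [max_eq_right, max_eq_left, hlt.le] <;>
      by_cases ha : a = v <;> by_cases hb : b = v <;> simp [ha, hb] <;> omega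
  calc inversionDist S (l₁ ++ a :: b :: l₂) (l₁ ++ b :: a :: l₂)
      ≤ ∑ v ∈ S, if v = max a b then 1 else 0 := Finset.sum_le_sum fun v _ => hv v
    _ ≤ 1 := by rw [Finset.sum_ite_eq']; split_ifs <;> simp

theorem inversionDist_le_of_stepsTo {n : ℕ} {l l' : List ℤ} (h : StepsTo n l l')
    (S : Finset ℤ) : inversionDist S l l' ≤ n := by
  induction n generalizing l with
  | zero => cases h; simp [inversionDist]
  | succ n ih =>
    obtain ⟨τ, hadj, hst⟩ := h
    calc inversionDist S l l' ≤ inversionDist S l τ + inversionDist S τ l' :=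
          inversionDist_triangle S l τ l'
      _ ≤ 1 + n := add_le_add (inversionDist_le_one_of_adjTrans hadj S) (ih hst)
      _ = n + 1 := add_comm 1 n

theorem StepsTo.trans {m n : ℕ} {l₁ l₂ l₃ : List ℤ} (h₁ : StepsTo m l₁ l₂)
    (h₂ : StepsTo n l₂ l₃) : StepsTo (m + n) l₁ l₃ := by
  induction m generalizing l₁ with
  | zero => cases h₁; simpa using h₂
  | succ m ih =>
    obtain ⟨τ, hadj, hst⟩ := h₁
    rw [Nat.add_right_comm]
    exact ⟨τ, hadj, ih hst⟩

theorem StepsTo.cons {n : ℕ} {l l' : List ℤ} (x : ℤ) (h : StepsTo n l l') :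
    StepsTo n (x :: l) (x :: l') := by
  induction n generalizing l with
  | zero => cases h; rfl
  | succ n ih =>
    obtain ⟨τ, ⟨l₁, l₂, a, b, hab, rfl, rfl⟩, hst⟩ := h
    exact ⟨_, ⟨x :: l₁, l₂, a, b, hab, rfl, rfl⟩, ih hst⟩

theorem stepsTo_append_cons {u : List ℤ} {b : ℤ} (hb : b ∉ u) (v : List ℤ) :
    StepsTo u.length (u ++ b :: v) (b :: (u ++ v)) := by
  induction u with
  | nil => rfl
  | cons x u ih =>
    simp only [List.mem_cons, not_or] at hb
    have hswap : StepsTo 1 (x :: b :: (u ++ v)) (b :: x :: (u ++ v)) :=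
      ⟨_, ⟨[], u ++ v, x, b, Ne.symm hb.1, rfl, rfl⟩, rfl⟩
    simpa using ((ih hb.2).cons x).trans hswap

theorem exists_stepsTo_of_perm {l l' : List ℤ} (h : l.Perm l') (hnd : l'.Nodup) :
    ∃ n, StepsTo n l l' := by
  induction l' generalizing l with
  | nil => exact ⟨0, h.eq_nil⟩
  | cons b l' ih =>
    obtain ⟨u, v, rfl⟩ := List.append_of_mem (h.mem_iff.mpr List.mem_cons_self)
    have hbu : b ∉ u := fun hb =>
      List.disjoint_of_nodup_append (h.nodup_iff.mpr hnd) hb List.mem_cons_self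
    obtain ⟨n, hn⟩ := ih (List.perm_middle.symm.trans h).cons_inv (List.nodup_cons.mp hnd).2
    exact ⟨u.length + n, (stepsTo_append_cons hbu v).trans (hn.cons b)⟩

/-- `dK` is an infimum, hence `0` when no sequence of transpositions exists; a permutation
of a duplicate-free list guarantees one. -/
theorem inversionDist_le_dK {l l' : List ℤ} (h : l.Perm l') (hnd : l'.Nodup) (S : Finset ℤ) :
    inversionDist S l l' ≤ dK l l' := by
  obtain ⟨n, hn⟩ := exists_stepsTo_of_perm h hnd
  exact le_csInf ⟨n, hn⟩ fun _ hm => inversionDist_le_of_stepsTo hm S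

theorem inversionsAt_append_cons_of_lt {u v : List ℤ} {M w : ℤ} (hM : ∀ x ∈ u ++ v, x < M)
    (hw : w ≠ M) : inversionsAt (u ++ M :: v) w = inversionsAt (u ++ v) w := by
  rw [inversionsAt_append, inversionsAt_append]
  simp only [inversionsAt, List.countP_cons, if_neg (Ne.symm hw), zero_add]
  by_cases hMw : M < w
  · have hwu : w ∉ u := fun h => absurd (hM w (List.mem_append_left v h)) (by omega)
    simp [List.count_eq_zero.mpr hwu]
  · simp [hMw]

theorem inversionsAt_append_cons_self {u v : List ℤ} {M : ℤ} (hM : ∀ x ∈ u ++ v, x < M) :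
    inversionsAt (u ++ M :: v) M = v.length := by
  have hu : M ∉ u := fun h => lt_irrefl M (hM M (List.mem_append_left v h))
  have hv : M ∉ v := fun h => lt_irrefl M (hM M (List.mem_append_right u h))
  rw [inversionsAt_append, inversionsAt_eq_zero_of_notMem hu, List.count_eq_zero.mpr hu]
  simp only [inversionsAt, if_pos, inversionsAt_eq_zero_of_notMem hv]
  simpa using List.countP_eq_length.mpr fun x hx => decide_eq_true (hM x (by simp [hx]))

/-- The maximum `M` of `l` stands in front of exactly `inversionsAt l M` entries; remove it and
induct. -/
theorem eq_of_inversionsAt_eq {l l' : List ℤ} (hp : l.Perm l') (hnd : l.Nodup)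
    (h : ∀ v ∈ l, inversionsAt l v = inversionsAt l' v) : l = l' := by
  induction hlen : l.length generalizing l l' with
  | zero =>
    obtain rfl := List.length_eq_zero_iff.mp hlen
    exact hp.nil_eq
  | succ n ih =>
    obtain ⟨M, hMl, hMmax⟩ := l.toFinset.exists_max_image id
      ((List.toFinset_nonempty_iff l).mpr (List.ne_nil_of_length_eq_add_one hlen))
    simp only [List.mem_toFinset, id] at hMl hMmax
    obtain ⟨u, v, rfl⟩ := List.append_of_mem hMl
    obtain ⟨u', v', rfl⟩ := List.append_of_mem (hp.mem_iff.mp hMl)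
    have hmid {u v : List ℤ} {x : ℤ} (hx : x ∈ u ++ v) : x ∈ u ++ M :: v :=
      List.perm_middle.symm.subset (List.mem_cons_of_mem M hx)
    have hlt : ∀ x ∈ u ++ v, x < M := fun x hx =>
      (hMmax x (hmid hx)).lt_of_ne fun hxM => (List.nodup_middle.mp hnd).notMem (hxM ▸ hx)
    have hlt' : ∀ x ∈ u' ++ v', x < M := fun x hx =>
      (hMmax x (hp.mem_iff.mpr (hmid hx))).lt_of_ne
        fun hxM => (List.nodup_middle.mp (hp.nodup_iff.mp hnd)).notMem (hxM ▸ hx)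
    have hv : v.length = v'.length := by
      have := h M hMl
      rwa [inversionsAt_append_cons_self hlt, inversionsAt_append_cons_self hlt'] at this
    have huv : u ++ v = u' ++ v' := by
      refine ih (List.perm_middle.symm.trans (hp.trans List.perm_middle)).cons_inv
        (List.nodup_middle.mp hnd).of_cons (fun w hw => ?_) (by simp at hlen ⊢; omega)
      have hwM : w ≠ M := (hlt w hw).ne
      rw [← inversionsAt_append_cons_of_lt hlt hwM, ← inversionsAt_append_cons_of_lt hlt' hwM]
      exact h w (hmid hw)
    obtain ⟨rfl, rfl⟩ := List.append_inj' huv hv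
    rfl

/-- The cast in `rangeList` elaborates as a lift into the list monad; this is the intended
reading. -/
theorem rangeList_eq_map (a n : ℕ) : rangeList a n = (List.range' a n).map Nat.cast := by
  unfold rangeList
  induction List.range' a n <;> simp_all [bind, pure]

theorem mem_rangeList {a n : ℕ} {x : ℤ} :
    x ∈ rangeList a n ↔ (a : ℤ) ≤ x ∧ x < a + n := by
  simp only [rangeList_eq_map, List.mem_map, List.mem_range'_1]
  constructor
  · rintro ⟨m, hm, rfl⟩
    omega
  · rintro ⟨h₁, h₂⟩
    exact ⟨x.toNat, by omega, by omega⟩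

theorem rangeList_nodup (a n : ℕ) : (rangeList a n).Nodup := by
  rw [rangeList_eq_map]
  exact (List.nodup_range' ..).map Nat.cast_injective

theorem rangeList_add (a m n : ℕ) :
    rangeList a (m + n) = rangeList a m ++ rangeList (a + m) n := by
  simp [rangeList_eq_map, ← List.range'_append_1]

theorem rangeList_succ (a n : ℕ) :
    rangeList a (n + 1) = rangeList a n ++ [((a + n : ℕ) : ℤ)] := by
  simp [rangeList_eq_map, List.range'_concat]

section permList

variable {k : ℕ} {σ : List ℤ}

theorem permList.perm (h : permList k σ) : σ.Perm (rangeList 1 k) := Multiset.coe_eq_coe.mp h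

theorem permList.nodup (h : permList k σ) : σ.Nodup :=
  h.perm.nodup_iff.mpr (rangeList_nodup 1 k)

theorem permList.length (h : permList k σ) : σ.length = k := by
  simpa [rangeList_eq_map] using h.perm.length_eq

theorem permList.mem_iff (h : permList k σ) {x : ℤ} : x ∈ σ ↔ 1 ≤ x ∧ x ≤ k := by
  rw [h.perm.mem_iff, mem_rangeList]
  omega

theorem permList.restrictTo_eq (h : permList k σ) : restrictTo k σ = σ :=
  List.filter_eq_self.mpr fun _ hx => decide_eq_true (h.mem_iff.mp hx).2

theorem ncard_setOf_permList (k : ℕ) : {σ | permList k σ}.ncard = k.factorial := by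
  classical
  have : {σ | permList k σ} = ((rangeList 1 k).permutations.toFinset : Set (List ℤ)) := by
    ext σ
    simp [permList, List.mem_permutations, Multiset.coe_eq_coe]
  rw [this, Set.ncard_coe_finset, List.toFinset_card_of_nodup
    (List.nodup_permutations _ (rangeList_nodup 1 k)), List.length_permutations]
  simp [rangeList_eq_map]

theorem permList.eq_of_inversionDist_eq_zero {σ' : List ℤ} (hσ : permList k σ)
    (hσ' : permList k σ') (h : inversionDist (Icc 1 k) σ σ' = 0) : σ = σ' := by
  refine eq_of_inversionsAt_eq (hσ.perm.trans hσ'.perm.symm) hσ.nodup fun v hv => ?_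
  have hv' := hσ.mem_iff.mp hv
  have := (Finset.sum_eq_zero_iff.mp h) v (Finset.mem_Icc.mpr hv')
  omega

end permList

def insertBeforeLast (c : ℕ) (w : ℤ) (l : List ℤ) : List ℤ :=
  l.take (l.length - c) ++ w :: l.drop (l.length - c)

section insertBeforeLast

variable {c : ℕ} {w : ℤ} {l : List ℤ}

theorem insertBeforeLast_perm : (insertBeforeLast c w l).Perm (w :: l) := by
  rw [insertBeforeLast]
  exact List.perm_middle.trans (by rw [List.take_append_drop])

theorem restrictTo_insertBeforeLast {k : ℕ} (hw : (k : ℤ) < w) :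
    restrictTo k (insertBeforeLast c w l) = restrictTo k l := by
  simp only [restrictTo, insertBeforeLast, List.filter_append, List.filter_cons,
    decide_eq_true_eq, not_le.mpr hw, if_false]
  rw [← List.filter_append, List.take_append_drop]

theorem inversionsAt_insertBeforeLast_of_lt {v : ℤ} (hv : v < w) :
    inversionsAt (insertBeforeLast c w l) v = inversionsAt l v := by
  simp [insertBeforeLast, inversionsAt_append, inversionsAt, hv.ne', not_lt.mpr hv.le]
  rw [← inversionsAt_append, List.take_append_drop]

theorem inversionsAt_insertBeforeLast_self (hl : ∀ x ∈ l, x < w) (hc : c ≤ l.length) :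
    inversionsAt (insertBeforeLast c w l) w = c := by
  rw [insertBeforeLast, inversionsAt_append_cons_self (by simpa using hl)]
  simp only [List.length_drop]
  omega

end insertBeforeLast

/-- Inserts `w, w + 1, …, w + n - 1` in increasing order, each `w + j` in front of the last
`c j` entries; later insertions are larger, so they leave the earlier inversion counts intact. -/
def insertAscending (w : ℕ) : (n : ℕ) → (Fin n → ℕ) → List ℤ → List ℤ
  | 0, _, l => l
  | n + 1, c, l => insertBeforeLast (c (Fin.last n)) (w + n : ℕ)
      (insertAscending w n (fun j => c j.castSucc) l)

section insertAscending

variable {w n : ℕ} {c : Fin n → ℕ} {l : List ℤ}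

theorem insertAscending_perm : (insertAscending w n c l).Perm (l ++ rangeList w n) := by
  induction n with
  | zero => simp [insertAscending, rangeList_eq_map]
  | succ n ih =>
    rw [rangeList_succ, ← List.append_assoc]
    exact insertBeforeLast_perm.trans ((ih.cons _).trans (List.perm_append_singleton _ _).symm)

theorem restrictTo_insertAscending {k : ℕ} (hk : k < w) :
    restrictTo k (insertAscending w n c l) = restrictTo k l := by
  induction n with
  | zero => rfl
  | succ n ih => rw [insertAscending, restrictTo_insertBeforeLast (by omega), ih]

theorem inversionsAt_insertAscending_of_lt {v : ℤ} (hv : v < w) :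
    inversionsAt (insertAscending w n c l) v = inversionsAt l v := by
  induction n with
  | zero => rfl
  | succ n ih => rw [insertAscending, inversionsAt_insertBeforeLast_of_lt (by omega), ih]

theorem inversionsAt_insertAscending (hl : ∀ x ∈ l, x < w) (hc : ∀ j, c j ≤ l.length)
    (j : Fin n) : inversionsAt (insertAscending w n c l) (w + j : ℕ) = c j := by
  induction n with
  | zero => exact j.elim0
  | succ n ih =>
    have hperm := insertAscending_perm (w := w) (c := fun j => c j.castSucc) (l := l)
    rcases Fin.eq_castSucc_or_eq_last j with ⟨i, rfl⟩ | rfl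
    · rw [insertAscending, inversionsAt_insertBeforeLast_of_lt (by simp)]
      exact ih (fun i => hc _) i
    · refine inversionsAt_insertBeforeLast_self (fun x hx => ?_) ?_
      · rcases List.mem_append.mp (hperm.mem_iff.mp hx) with hx | hx
        · have := hl x hx
          push_cast
          omega
        · have := (mem_rangeList.mp hx).2
          push_cast at this ⊢
          omega
      · rw [hperm.length_eq, List.length_append, rangeList_eq_map]
        simpa using (hc _).trans (Nat.le_add_right _ _)

end insertAscending

theorem Multiset.mul_esymm_eq_sum {R : Type*} [CommRing R] (s : Multiset R) (k : ℕ) :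
    k * s.esymm k = (-1) ^ (k + 1) *
      ∑ a ∈ HasAntidiagonal.antidiagonal k with a.1 < k,
        (-1) ^ a.1 * s.esymm a.1 * (s.map (· ^ a.2)).sum := by
  obtain ⟨n, f, rfl⟩ : ∃ n, ∃ f : Fin n → R, s = univ.val.map f :=
    ⟨_, s.toList.get, by rw [Fin.univ_val_map, List.ofFn_get, Multiset.coe_toList]⟩
  have h := congrArg (MvPolynomial.aeval f) (MvPolynomial.mul_esymm_eq_sum (Fin n) R k)
  simp only [map_mul, map_sum, map_pow, map_neg, map_one, map_natCast,
    MvPolynomial.aeval_esymm_eq_multiset_esymm, MvPolynomial.psum, MvPolynomial.aeval_X] at h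
  simpa [Finset.sum, Multiset.map_map, Function.comp_def] using h

theorem Multiset.eq_of_powerSum_eq {R : Type*} [CommRing R] [IsDomain R] {s s' : Multiset R}
    {N : ℕ} (hs : card s = N) (hs' : card s' = N)
    (hN : ∀ n, 0 < n → n ≤ N → (n : R) ≠ 0)
    (h : ∀ j, 0 < j → j ≤ N → (s.map (· ^ j)).sum = (s'.map (· ^ j)).sum) : s = s' := by
  have hesymm : ∀ j ≤ N, s.esymm j = s'.esymm j := by
    intro j
    induction j using Nat.strong_induction_on with
    | _ j ih =>
      intro hjN
      rcases Nat.eq_zero_or_pos j with rfl | hj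
      · simp [Multiset.esymm]
      refine mul_left_cancel₀ (hN j hj hjN) ?_
      rw [Multiset.mul_esymm_eq_sum, Multiset.mul_esymm_eq_sum]
      congr 1
      refine Finset.sum_congr rfl fun a ha => ?_
      obtain ⟨ha, hlt⟩ := Finset.mem_filter.mp ha
      rw [HasAntidiagonal.mem_antidiagonal] at ha
      rw [ih a.1 hlt (by omega), h a.2 (by omega) (by omega)]
  rw [← Polynomial.roots_multiset_prod_X_sub_C s, ← Polynomial.roots_multiset_prod_X_sub_C s',
    prod_X_sub_X_eq_sum_esymm, prod_X_sub_X_eq_sum_esymm, hs, hs']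
  exact congrArg _ (Finset.sum_congr rfl fun j hj => by
    rw [hesymm j (by simpa [Nat.lt_succ_iff] using hj)])

theorem Multiset.map_neg_eq_of_odd_powerSum_eq_zero {R : Type*} [CommRing R] [IsDomain R]
    {s : Multiset R} {N : ℕ} (hs : card s ≤ N) (hN : ∀ n, 0 < n → n ≤ N → (n : R) ≠ 0)
    (h : ∀ j, Odd j → j ≤ N → (s.map (· ^ j)).sum = 0) : s.map Neg.neg = s := by
  set pad := Multiset.replicate (N - card s) (0 : R)
  have hpad : pad.map Neg.neg = pad := by simp [pad, Multiset.map_replicate]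
  suffices (s + pad).map Neg.neg = s + pad by
    rwa [Multiset.map_add, hpad, add_left_inj] at this
  refine Multiset.eq_of_powerSum_eq (N := N) (by simp [pad]; omega) (by simp [pad]; omega) hN
    fun j hj _ => ?_
  have hpad0 : (pad.map (· ^ j)).sum = 0 := by simp [pad, Multiset.map_replicate, hj.ne']
  rw [Multiset.map_add, Multiset.map_add, Multiset.sum_add, Multiset.map_add, Multiset.sum_add,
    hpad, hpad0, Multiset.map_map]
  rcases Nat.even_or_odd j with he | ho
  · simp [he.neg_pow]
  · simp [ho.neg_pow, h j ho (by omega)]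

theorem eq_zero_of_sum_mul_odd_pow_eq_zero {R ι : Type*} [CommRing R] [IsDomain R]
    {s : Finset ι} {x : ι → R} (hinj : Set.InjOn x s)
    (hneg : ∀ i ∈ s, ∀ j ∈ s, x i ≠ -x j)
    {E : ι → ℤ} {N : ℕ} (hE : ∑ i ∈ s, (E i).natAbs ≤ N)
    (hN : ∀ n, 0 < n → n ≤ N → (n : R) ≠ 0)
    (h : ∀ j, Odd j → j ≤ N → ∑ i ∈ s, (E i : R) * x i ^ j = 0) :
    ∀ i ∈ s, E i = 0 := by
  classical
  set F : ι → Multiset R := fun i =>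
    Multiset.replicate (E i).toNat (x i) + Multiset.replicate (-E i).toNat (-x i)
  have hcard : Multiset.card (∑ i ∈ s, F i) ≤ N := by
    refine le_trans (le_of_eq ?_) hE
    rw [← Multiset.cardHom_apply, map_sum]
    exact Finset.sum_congr rfl fun i _ => by simp [F]
  have hodd : ∀ j, Odd j → j ≤ N → ((∑ i ∈ s, F i).map (· ^ j)).sum = 0 := by
    intro j hj hjN
    rw [← h j hj hjN, ← Multiset.coe_mapAddMonoidHom, ← Multiset.coe_sumAddMonoidHom,
      ← AddMonoidHom.comp_apply, map_sum]
    refine Finset.sum_congr rfl fun i _ => ?_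
    have hEi : ((E i).toNat : R) - ((-E i).toNat : R) = E i := by
      conv_rhs => rw [← Int.toNat_sub_toNat_neg (E i)]
      push_cast; rfl
    simp only [F, AddMonoidHom.comp_apply, Multiset.coe_mapAddMonoidHom,
      Multiset.coe_sumAddMonoidHom, Multiset.map_add, Multiset.map_replicate, Multiset.sum_add,
      Multiset.sum_replicate, nsmul_eq_mul, hj.neg_pow]
    linear_combination x i ^ j * hEi
  have hU := Multiset.map_neg_eq_of_odd_powerSum_eq_zero hcard hN hodd
  intro i hi
  have hoff : ∀ j ∈ s, j ≠ i → (F j).count (x i) = 0 ∧ (F j).count (-x i) = 0 := by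
    intro j hj hji
    have h1 : x j ≠ x i := fun h => hji (hinj hj hi h)
    have h2 : x j ≠ -x i := hneg j hj i hi
    have h3 : -x j ≠ x i := fun h => hneg i hi j hj h.symm
    simp [F, Multiset.count_replicate, h1, h2, h3]
  have hcount := congrArg (Multiset.count (-x i)) hU
  rw [Multiset.count_map_eq_count' _ _ neg_injective, Multiset.count_sum',
    Multiset.count_sum',
    Finset.sum_eq_single_of_mem i hi fun j hj hji => (hoff j hj hji).1,
    Finset.sum_eq_single_of_mem i hi fun j hj hji => (hoff j hj hji).2] at hcount
  simp [F, Multiset.count_replicate, hneg i hi i hi, (hneg i hi i hi).symm] at hcount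
  omega

noncomputable def syndrome (P t k : ℕ) (σ : List ℤ) : Fin t → ZMod P := fun l =>
  ∑ v ∈ Icc (1 : ℤ) k, (inversionsAt σ v : ZMod P) * (v : ZMod P) ^ (2 * (l : ℕ) + 1)

theorem inversionDist_eq_zero_of_syndrome_eq {P t k : ℕ} [Fact P.Prime] (htP : 2 * t < P)
    (hkP : 2 * k < P) {σ σ' : List ℤ} (hD : inversionDist (Icc 1 k) σ σ' ≤ 2 * t)
    (h : syndrome P t k σ = syndrome P t k σ') : inversionDist (Icc 1 k) σ σ' = 0 := by
  have hinj : Set.InjOn (fun v : ℤ => (v : ZMod P)) (Icc (1 : ℤ) k) := by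
    intro v hv v' hv' hvv'
    simp only [coe_Icc, Set.mem_Icc] at hv hv'
    have hdvd := (ZMod.intCast_eq_intCast_iff_dvd_sub v v' P).mp hvv'
    have := Int.eq_zero_of_dvd_of_natAbs_lt_natAbs hdvd (by omega)
    omega
  have hneg : ∀ v ∈ Icc (1 : ℤ) k, ∀ v' ∈ Icc (1 : ℤ) k, (v : ZMod P) ≠ -v' := by
    intro v hv v' hv' hvv'
    simp only [mem_Icc] at hv hv'
    rw [eq_neg_iff_add_eq_zero, ← Int.cast_add, ZMod.intCast_zmod_eq_zero_iff_dvd] at hvv'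
    have := Int.eq_zero_of_dvd_of_natAbs_lt_natAbs hvv' (by omega)
    omega
  have hN : ∀ n, 0 < n → n ≤ 2 * t → (n : ZMod P) ≠ 0 := fun n hn hnt hn0 =>
    absurd (Nat.le_of_dvd hn ((ZMod.natCast_eq_zero_iff n P).mp hn0)) (by omega)
  have hodd : ∀ j, Odd j → j ≤ 2 * t → ∑ v ∈ Icc (1 : ℤ) k,
      (((inversionsAt σ v : ℤ) - inversionsAt σ' v : ℤ) : ZMod P) * (v : ZMod P) ^ j = 0 := by
    rintro _ ⟨l, rfl⟩ hl
    have := congrFun h ⟨l, by omega⟩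
    simp only [syndrome] at this
    push_cast
    simp only [sub_mul, Finset.sum_sub_distrib, this, sub_self]
  have hE := eq_zero_of_sum_mul_odd_pow_eq_zero hinj hneg hD hN hodd
  exact Finset.sum_eq_zero fun v hv => by simp [hE v hv]

section codeword

variable {P t b k : ℕ} (e : (Fin t → ZMod P) ↪ (Fin (t + 1) → Fin b)) {σ σ' : List ℤ}

noncomputable def codeword (k : ℕ) (σ : List ℤ) : List ℤ :=
  insertAscending (k + 1) (t + 1) (fun j => 2 * t * e (syndrome P t k σ) j) σ

theorem permList_codeword (hσ : permList k σ) : permList (k + (t + 1)) (codeword e k σ) := by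
  refine Multiset.coe_eq_coe.mpr (insertAscending_perm.trans ?_)
  rw [rangeList_add 1 k (t + 1), add_comm 1 k]
  exact hσ.perm.append_right _

theorem restrictTo_codeword (hσ : permList k σ) : restrictTo k (codeword e k σ) = σ := by
  rw [codeword, restrictTo_insertAscending (Nat.lt_succ_self k), hσ.restrictTo_eq]

theorem inversionsAt_codeword_of_le {v : ℤ} (hv : v ≤ k) :
    inversionsAt (codeword e k σ) v = inversionsAt σ v :=
  inversionsAt_insertAscending_of_lt (by push_cast; omega)

theorem inversionsAt_codeword_top (hσ : permList k σ) (hb : 2 * t * (b - 1) ≤ k)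
    (j : Fin (t + 1)) :
    inversionsAt (codeword e k σ) (k + 1 + j : ℕ) = 2 * t * e (syndrome P t k σ) j := by
  refine inversionsAt_insertAscending (fun x hx => ?_) (fun i => ?_) j
  · have := (hσ.mem_iff.mp hx).2
    push_cast
    omega
  · rw [hσ.length]
    exact le_trans (Nat.mul_le_mul_left _ (by omega)) hb

theorem two_mul_add_one_le_dK_codeword [Fact P.Prime] (htP : 2 * t < P) (hkP : 2 * k < P)
    (hb : 2 * t * (b - 1) ≤ k) (hσ : permList k σ) (hσ' : permList k σ') (hne : σ ≠ σ') :
    2 * t + 1 ≤ dK (codeword e k σ) (codeword e k σ') := by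
  have hperm := (permList_codeword e hσ).perm.trans (permList_codeword e hσ').perm.symm
  have hnd := (permList_codeword e hσ').nodup
  have hlow : inversionDist (Icc 1 k) (codeword e k σ) (codeword e k σ') =
      inversionDist (Icc 1 k) σ σ' := Finset.sum_congr rfl fun v hv => by
    rw [inversionsAt_codeword_of_le e (mem_Icc.mp hv).2,
      inversionsAt_codeword_of_le e (mem_Icc.mp hv).2]
  have hD0 : inversionDist (Icc 1 k) σ σ' ≠ 0 := fun h =>
    hne (hσ.eq_of_inversionDist_eq_zero hσ' h)
  by_cases hD : 2 * t + 1 ≤ inversionDist (Icc 1 k) σ σ'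
  · exact hD.trans (hlow ▸ inversionDist_le_dK hperm hnd _)
  have hsyn : syndrome P t k σ ≠ syndrome P t k σ' := fun h =>
    hD0 (inversionDist_eq_zero_of_syndrome_eq htP hkP (by omega) h)
  obtain ⟨j, hj⟩ := Function.ne_iff.mp (e.injective.ne hsyn)
  set v₀ : ℤ := ((k + 1 + j : ℕ) : ℤ)
  have hv₀ : v₀ ∉ Icc (1 : ℤ) k := by simp [v₀]; omega
  have htop : 2 * t ≤ ((inversionsAt (codeword e k σ) v₀ : ℤ) -
      inversionsAt (codeword e k σ') v₀).natAbs := by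
    rw [inversionsAt_codeword_top e hσ hb, inversionsAt_codeword_top e hσ' hb]
    have hd : (e (syndrome P t k σ) j : ℤ) ≠ e (syndrome P t k σ') j := by
      exact_mod_cast Fin.val_ne_of_ne hj
    push_cast
    rw [← mul_sub, Int.natAbs_mul]
    exact Nat.le_mul_of_pos_right _ (by omega)
  calc 2 * t + 1
        ≤ inversionDist (insert v₀ (Icc 1 k)) (codeword e k σ) (codeword e k σ') := by
        rw [inversionDist, sum_insert hv₀, ← inversionDist, hlow]
        omega
    _ ≤ dK (codeword e k σ) (codeword e k σ') := inversionDist_le_dK hperm hnd _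

end codeword

theorem exists_systematic_code {t k P b : ℕ} [Fact P.Prime] (htP : 2 * t < P) (hkP : 2 * k < P)
    (hb : 2 * t * (b - 1) ≤ k) (hcap : P ^ t ≤ b ^ (t + 1)) :
    ∃ C : Set (List ℤ),
      (∀ α ∈ C, permList (k + (t + 1)) α) ∧
      C.ncard = Nat.factorial k ∧
      (∀ σ : List ℤ, permList k σ → ∃! α, α ∈ C ∧ restrictTo k α = σ) ∧
      (∀ α ∈ C, ∀ β ∈ C, α ≠ β → 2 * t + 1 ≤ dK α β) := by
  obtain ⟨e⟩ := Function.Embedding.nonempty_of_card_le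
    (α := Fin t → ZMod P) (β := Fin (t + 1) → Fin b) (by simpa using hcap)
  have hinj : Set.InjOn (codeword e k) {σ | permList k σ} := fun σ hσ σ' hσ' h => by
    rw [← restrictTo_codeword e hσ, ← restrictTo_codeword e hσ', h]
  refine ⟨codeword e k '' {σ | permList k σ}, ?_, ?_, fun σ hσ => ?_, ?_⟩
  · rintro _ ⟨σ, hσ, rfl⟩
    exact permList_codeword e hσ
  · rw [hinj.ncard_image, ncard_setOf_permList]
  · refine ⟨codeword e k σ, ⟨⟨σ, hσ, rfl⟩, restrictTo_codeword e hσ⟩, ?_⟩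
    rintro _ ⟨⟨σ', hσ', rfl⟩, hres⟩
    rw [restrictTo_codeword e hσ'] at hres
    rw [hres]
  · rintro _ ⟨σ, hσ, rfl⟩ _ ⟨σ', hσ', rfl⟩ hne
    exact two_mul_add_one_le_dK_codeword e htP hkP hb hσ hσ' fun h => hne (h ▸ rfl)

theorem pow_le_div_two_mul_pow {t k P : ℕ} (ht : 0 < t) (hk : (16 * t) ^ (t + 1) ≤ k)
    (hP : P ≤ 4 * k) : P ^ t ≤ (k / (2 * t)) ^ (t + 1) := by
  set b := k / (2 * t)
  have hk16 : 16 * t ≤ k := le_trans (Nat.le_self_pow (by omega) _) hk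
  have hb1 : 1 ≤ b := (Nat.le_div_iff_mul_le (by omega)).mpr (by omega)
  have hkb : k ≤ 4 * t * b := by
    have h₁ : k < 2 * t * (b + 1) := Nat.lt_mul_div_succ k (by omega)
    have h₂ : 2 * t ≤ 2 * t * b := Nat.le_mul_of_pos_right _ hb1
    linarith
  refine Nat.le_of_mul_le_mul_left ?_ (pow_pos (by omega : 0 < 4 * t) (t + 1))
  calc (4 * t) ^ (t + 1) * P ^ t ≤ (4 * t) ^ (t + 1) * (4 ^ t * k ^ t) := by
        rw [← mul_pow]
        gcongr
    _ = 4 ^ t * (4 * t) ^ (t + 1) * k ^ t := by ring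
    _ ≤ (16 * t) ^ (t + 1) * k ^ t := by
        refine Nat.mul_le_mul_right _ ?_
        rw [show 16 * t = 4 * (4 * t) by ring, mul_pow 4 (4 * t)]
        exact Nat.mul_le_mul_right _ (Nat.pow_le_pow_right (by norm_num) (Nat.le_succ t))
    _ ≤ k ^ (t + 1) := by rw [pow_succ' k t]; exact Nat.mul_le_mul_right _ hk
    _ ≤ (4 * t * b) ^ (t + 1) := by gcongr
    _ = (4 * t) ^ (t + 1) * b ^ (t + 1) := mul_pow ..

/-- Corollary 3. Let `t` be a power of a prime and let `r = t + 1`.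
Then there exists an integer `K_t` such that for every integer `k ≥ K_t` for which `k - 2`
is a power of a prime, there exists a `(k+r, k)` systematic `t`-error-correcting code: a
code `C ⊆ S_{k+r}` of size `k!` such that every `σ ∈ S_k` is the restriction of exactly
one codeword of `C`, and distinct codewords of `C` are at Kendall τ-distance at least
`2t + 1`. -/
theorem stmt17 (t : ℕ) (ht : IsPrimePow t) :
    ∃ Kt : ℕ, ∀ k : ℕ, Kt ≤ k → IsPrimePow (k - 2) →
      ∃ C : Set (List ℤ),
        (∀ α ∈ C, permList (k + (t + 1)) α) ∧
        C.ncard = Nat.factorial k ∧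
        (∀ σ : List ℤ, permList k σ → ∃! α, α ∈ C ∧ restrictTo k α = σ) ∧
        (∀ α ∈ C, ∀ β ∈ C, α ≠ β → 2 * t + 1 ≤ dK α β) := by
  refine ⟨(16 * t) ^ (t + 1), fun k hk _ => ?_⟩
  have htk : 16 * t ≤ k := le_trans (Nat.le_self_pow (by omega) _) hk
  obtain ⟨P, hP, hkP, hP4k⟩ :=
    Nat.exists_prime_lt_and_le_two_mul (2 * k) (by have := ht.pos; omega)
  have := Fact.mk hP
  exact exists_systematic_code (b := k / (2 * t)) (by omega) hkP
    (le_trans (Nat.mul_le_mul_left _ (Nat.sub_le _ 1)) (Nat.mul_div_le k (2 * t)))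
    (pow_le_div_two_mul_pow ht.pos hk (by omega))
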